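/- Machine progress: every state occurring on a run from a typed machine state makes progress, i.e. no state reachable from a state of type 0 > n_A is a stuck state of the form (S_A, a<t>, K) where the stack at location a is empty. -/

import Mathlib

namespace RMC


/-- Algebraic terms (values) over a single-sorted first-order signature:
`F` is the set of function symbols, `ar` gives arities. Variables are natural numbers. -/
inductive Val (F : Type) (ar : F → ℕ) : Type
  | var : ℕ → Val F ar
  | app : (f : F) → (Fin (ar f) → Val F ar) → Val F ar

variable {F : Type} {ar : F → ℕ}

/-- Substitutions, as total maps from variables to values. -/
abbrev Subst (F : Type) (ar : F → ℕ) := ℕ → Val F ar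

/-- Applying a substitution to a value. -/
def Val.subst (σ : Subst F ar) : Val F ar → Val F ar
  | .var x => σ x
  | .app f v => .app f fun i => (v i).subst σ

/-- The identity (empty) substitution. -/
def idS : Subst F ar := Val.var

/-- The single substitution {t/x}. -/
def Subst.single (x : ℕ) (t : Val F ar) : Subst F ar :=
  Function.update Val.var x t

/-- Composition of substitutions: `comp τ σ` is τσ (first σ, then τ). -/
def Subst.comp (τ σ : Subst F ar) : Subst F ar := fun x => (σ x).subst τ

/-- Free variables of a value. -/
def Val.fv : Val F ar → Set ℕ
  | .var x => {x}
  | .app _ v => ⋃ i, (v i).fv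

/-- Computation terms of the Relational Machine Calculus, with locations
indexed by natural numbers: skip `*`, failure `0`, sequencing `M;N`,
Kleene star `M*`, sum `M+N`, push `[t]a`, pop `a<t>`, and new-variable `Ex.M`. -/
inductive Tm (F : Type) (ar : F → ℕ) : Type
  | skip
  | fail
  | seq (M N : Tm F ar)
  | star (M : Tm F ar)
  | sum (M N : Tm F ar)
  | push (t : Val F ar) (a : ℕ)
  | pop (a : ℕ) (t : Val F ar)
  | nu (x : ℕ) (M : Tm F ar)

/-- Applying a substitution to a term (naive, global variables). -/
def Tm.subst (σ : Subst F ar) : Tm F ar → Tm F ar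
  | .skip => .skip
  | .fail => .fail
  | .seq M N => .seq (M.subst σ) (N.subst σ)
  | .star M => .star (M.subst σ)
  | .sum M N => .sum (M.subst σ) (N.subst σ)
  | .push t a => .push (t.subst σ) a
  | .pop a t => .pop a (t.subst σ)
  | .nu x M => .nu x (M.subst σ)

/-- Free variables of a term; `Ex.M` binds x. -/
def Tm.fv : Tm F ar → Set ℕ
  | .skip => ∅
  | .fail => ∅
  | .seq M N => M.fv ∪ N.fv
  | .star M => M.fv
  | .sum M N => M.fv ∪ N.fv
  | .push t _ => t.fv
  | .pop _ t => t.fv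
  | .nu x M => M.fv \ {x}

/-- Duality: the syntactic involution exchanging push and pop and reversing
sequential composition. -/
def Tm.dagger : Tm F ar → Tm F ar
  | .skip => .skip
  | .fail => .fail
  | .seq M N => .seq N.dagger M.dagger
  | .star M => .star M.dagger
  | .sum M N => .sum M.dagger N.dagger
  | .push t a => .pop a t
  | .pop a t => .push t a
  | .nu x M => .nu x M.dagger

/-- n-fold sequential composition Mⁿ. -/
def Tm.pow (M : Tm F ar) : ℕ → Tm F ar
  | 0 => .skip
  | n+1 => .seq M (M.pow n)

/-- `[t₁]a; … ;[tₙ]a; M` -/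
def pushSeqThen (a : ℕ) (ts : List (Val F ar)) (M : Tm F ar) : Tm F ar :=
  ts.foldr (fun t K => .seq (.push t a) K) M

/-- `a<tₙ>; … ;a<t₁>; M` (note the inversion). -/
def popSeqThen (a : ℕ) (ts : List (Val F ar)) (M : Tm F ar) : Tm F ar :=
  ts.foldl (fun K t => .seq (.pop a t) K) M

/-- `[t₁]a; … ;[tₙ]a` -/
def pushSeq (a : ℕ) (ts : List (Val F ar)) : Tm F ar := pushSeqThen a ts .skip

/-- `a<tₙ>; … ;a<t₁>` -/
def popSeq (a : ℕ) (ts : List (Val F ar)) : Tm F ar := popSeqThen a ts .skip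

/-- `Ex₁…Exₙ.M` -/
def nuList (xs : List ℕ) (M : Tm F ar) : Tm F ar := xs.foldr .nu M

/-- A memory: a family of stacks (lists of values, head of the list = head of
the stack) indexed by locations. -/
abbrev Mem (F : Type) (ar : F → ℕ) := ℕ → List (Val F ar)

/-- Applying a substitution to a memory. -/
def Mem.subst (σ : Subst F ar) (S : Mem F ar) : Mem F ar := fun a => (S a).map (Val.subst σ)

/-- Free variables of a memory. -/
def Mem.fv (S : Mem F ar) : Set ℕ := ⋃ a, ⋃ t ∈ S a, Val.fv t

/-- The empty memory. -/
def emptyMem : Mem F ar := fun _ => []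


/-- Continuation stacks. -/
abbrev Cont (F : Type) (ar : F → ℕ) := List (Tm F ar)

/-- Applying a substitution to a continuation stack. -/
def Cont.subst (σ : Subst F ar) (K : Cont F ar) : Cont F ar := K.map (Tm.subst σ)

/-- Free variables of a continuation stack. -/
def Cont.fv (K : Cont F ar) : Set ℕ := ⋃ M ∈ K, Tm.fv M

/-- States of the relational abstract machine: a memory, a term, and a
continuation stack. -/
structure MState (F : Type) (ar : F → ℕ) where
  mem : Mem F ar
  tm : Tm F ar
  cont : Cont F ar

/-- The (non-deterministic) transitions of the relational abstract machine. -/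
inductive Step : MState F ar → MState F ar → Prop
  | skip {S : Mem F ar} {M : Tm F ar} {K : Cont F ar} :
      Step ⟨S, .skip, M :: K⟩ ⟨S, M, K⟩
  | seq {S : Mem F ar} {M N : Tm F ar} {K : Cont F ar} :
      Step ⟨S, .seq M N, K⟩ ⟨S, M, N :: K⟩
  | star_skip {S : Mem F ar} {M : Tm F ar} {K : Cont F ar} :
      Step ⟨S, .star M, K⟩ ⟨S, .skip, K⟩
  | star_unfold {S : Mem F ar} {M : Tm F ar} {K : Cont F ar} :
      Step ⟨S, .star M, K⟩ ⟨S, .seq M (.star M), K⟩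
  | sum_l {S : Mem F ar} {M N : Tm F ar} {K : Cont F ar} :
      Step ⟨S, .sum M N, K⟩ ⟨S, M, K⟩
  | sum_r {S : Mem F ar} {M N : Tm F ar} {K : Cont F ar} :
      Step ⟨S, .sum M N, K⟩ ⟨S, N, K⟩
  | push {S : Mem F ar} {t : Val F ar} {a : ℕ} {K : Cont F ar} :
      Step ⟨S, .push t a, K⟩ ⟨Function.update S a (t :: S a), .skip, K⟩
  | nu {S : Mem F ar} {x : ℕ} {M : Tm F ar} {K : Cont F ar} {y : ℕ} :
      y ∉ Tm.fv M → y ∉ Mem.fv S → y ∉ Cont.fv K → y ≠ x →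
      Step ⟨S, .nu x M, K⟩ ⟨S, Tm.subst (Subst.single x (.var y)) M, K⟩
  | pop_var_same {S : Mem F ar} {a x : ℕ} {rest : List (Val F ar)} {K : Cont F ar} :
      S a = .var x :: rest →
      Step ⟨S, .pop a (.var x), K⟩ ⟨Function.update S a rest, .skip, K⟩
  | pop_app {S : Mem F ar} {a : ℕ} {f : F} {v w : Fin (ar f) → Val F ar}
      {rest : List (Val F ar)} {K : Cont F ar} :
      S a = .app f v :: rest →
      Step ⟨S, .pop a (.app f w), K⟩
        ⟨Function.update S a ((List.ofFn v).reverse ++ rest), popSeq a (List.ofFn w), K⟩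
  | pop_var_subst {S : Mem F ar} {a x : ℕ} {rest : List (Val F ar)} {t : Val F ar}
      {K : Cont F ar} :
      S a = .var x :: rest → x ∉ Val.fv t →
      Step ⟨S, .pop a t, K⟩
        ⟨Mem.subst (Subst.single x t) (Function.update S a rest), .skip,
          Cont.subst (Subst.single x t) K⟩
  | pop_subst_var {S : Mem F ar} {a x : ℕ} {rest : List (Val F ar)} {t : Val F ar}
      {K : Cont F ar} :
      S a = t :: rest → x ∉ Val.fv t →
      Step ⟨S, .pop a (.var x), K⟩
        ⟨Mem.subst (Subst.single x t) (Function.update S a rest), .skip,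
          Cont.subst (Subst.single x t) K⟩

/-- Memory types: a natural number (stack arity) for each location, zero for
all but finitely many locations. -/
abbrev MTy := ℕ →₀ ℕ

/-- The simply-typed RMC: `Ty M m n` is the typing judgement `M : m_A > n_A`,
giving the input and output arity of `M` at each location. -/
inductive Ty : Tm F ar → MTy → MTy → Prop
  | skip (n : MTy) : Ty .skip n n
  | seq {M N : Tm F ar} {k m n : MTy} : Ty M k m → Ty N m n → Ty (.seq M N) k n
  | fail (m n : MTy) : Ty .fail m n
  | sum {M N : Tm F ar} {m n : MTy} : Ty M m n → Ty N m n → Ty (.sum M N) m n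
  | star {M : Tm F ar} {n : MTy} : Ty M n n → Ty (.star M) n n
  | nu {M : Tm F ar} {m n : MTy} (x : ℕ) : Ty M m n → Ty (.nu x M) m n
  | push (t : Val F ar) (a : ℕ) (n : MTy) : Ty (.push t a) n (n + Finsupp.single a 1)
  | pop (a : ℕ) (t : Val F ar) (n : MTy) : Ty (.pop a t) (Finsupp.single a 1 + n) n

/-- A memory has memory type `n` when the stack at each location `a` has
length `n a`. -/
def MemTy (S : Mem F ar) (n : MTy) : Prop := ∀ a : ℕ, (S a).length = n a

/-- Typing of continuation stacks. -/
inductive ContTy : Cont F ar → MTy → MTy → Prop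
  | nil (n : MTy) : ContTy [] n n
  | cons {M : Tm F ar} {K : Cont F ar} {k m n : MTy} :
      Ty M k m → ContTy K m n → ContTy (M :: K) k n

/-- Typing of machine states: `(S, M, K) : 0 > n`. -/
def StateTy (st : MState F ar) (n : MTy) : Prop :=
  ∃ k m : MTy, MemTy st.mem k ∧ Ty st.tm k m ∧ ContTy st.cont m n

/-- A state is stuck for lack of input exactly when its term is a pop on a
location whose stack is empty; all other states make progress. -/
def Stuck (st : MState F ar) : Prop :=
  ∃ (a : ℕ) (t : Val F ar), st.tm = .pop a t ∧ st.mem a = []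

/-! Memory types only record stack lengths, so the argument is subject reduction: substitution
leaves every typing judgement intact, and each transition rearranges the memory exactly as the
type of the term it consumes prescribes. A typed state whose term is `a<t>` has input type
`1_a + m_A`, so its stack at `a` is non-empty, and such a state cannot be stuck. -/

lemma Ty.subst {M : Tm F ar} {m n : MTy} (σ : Subst F ar) (h : Ty M m n) :
    Ty (M.subst σ) m n := by
  induction h with
  | skip n => exact .skip n
  | seq _ _ ih₁ ih₂ => exact .seq ih₁ ih₂
  | fail m n => exact .fail m n
  | sum _ _ ih₁ ih₂ => exact .sum ih₁ ih₂
  | star _ ih => exact .star ih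
  | nu x _ ih => exact .nu x ih
  | push t a n => exact .push _ a n
  | pop a t n => exact .pop a _ n

lemma ContTy.subst {K : Cont F ar} {m n : MTy} (σ : Subst F ar) (h : ContTy K m n) :
    ContTy (Cont.subst σ K) m n := by
  induction h with
  | nil n => exact .nil n
  | cons hM _ ih => exact .cons (hM.subst σ) ih

lemma MemTy.subst {S : Mem F ar} {k : MTy} (σ : Subst F ar) (h : MemTy S k) :
    MemTy (Mem.subst σ S) k := by
  intro a
  simpa [Mem.subst] using h a

lemma Ty.push_inv {t : Val F ar} {a : ℕ} {k m : MTy} (h : Ty (.push t a) k m) :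
    m = k + Finsupp.single a 1 := by
  cases h
  rfl

lemma Ty.pop_inv {a : ℕ} {t : Val F ar} {k m : MTy} (h : Ty (.pop a t) k m) :
    k = Finsupp.single a 1 + m := by
  cases h
  rfl

lemma Ty.popSeqThen (a : ℕ) (ts : List (Val F ar)) {M : Tm F ar} {m n : MTy}
    (h : Ty M m n) : Ty (popSeqThen a ts M) (Finsupp.single a ts.length + m) n := by
  induction ts generalizing M m with
  | nil => simpa [RMC.popSeqThen] using h
  | cons t ts ih =>
    have h' := ih (Ty.seq (Ty.pop a t m) h)
    rwa [← add_assoc, ← Finsupp.single_add] at h'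

lemma MemTy.update_push {S : Mem F ar} {k : MTy} (h : MemTy S k) (a : ℕ) (t : Val F ar) :
    MemTy (Function.update S a (t :: S a)) (k + Finsupp.single a 1) := by
  intro b
  rcases eq_or_ne b a with rfl | hb
  · simp [h b]
  · simp [Function.update_of_ne hb, h b, Finsupp.single_eq_of_ne' hb.symm]

lemma MemTy.update_pop_append {S : Mem F ar} {m : MTy} {a : ℕ} {t : Val F ar}
    {rest : List (Val F ar)} (h : MemTy S (Finsupp.single a 1 + m)) (hS : S a = t :: rest)
    (l : List (Val F ar)) :
    MemTy (Function.update S a (l ++ rest)) (Finsupp.single a l.length + m) := by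
  intro b
  have hb := h b
  rcases eq_or_ne b a with rfl | hne
  · simp only [hS, List.length_cons, Finsupp.add_apply, Finsupp.single_eq_same] at hb
    simp only [Function.update_self, List.length_append, Finsupp.add_apply,
      Finsupp.single_eq_same]
    omega
  · simpa [Function.update_of_ne hne, Finsupp.single_eq_of_ne' hne.symm] using hb

lemma MemTy.update_pop {S : Mem F ar} {m : MTy} {a : ℕ} {t : Val F ar}
    {rest : List (Val F ar)} (h : MemTy S (Finsupp.single a 1 + m)) (hS : S a = t :: rest) :
    MemTy (Function.update S a rest) m := by
  simpa using h.update_pop_append hS []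

lemma StateTy.step {s s' : MState F ar} {n : MTy} (ht : StateTy s n) (h : Step s s') :
    StateTy s' n := by
  obtain ⟨S, M, K⟩ := s
  obtain ⟨k, m, hS, hM, hK⟩ := ht
  dsimp only at hS hM hK
  cases h with
  | skip =>
    cases hM
    cases hK with | cons hM' hK' =>
    exact ⟨k, _, hS, hM', hK'⟩
  | seq =>
    cases hM with | seq hM₁ hM₂ =>
    exact ⟨k, _, hS, hM₁, .cons hM₂ hK⟩
  | star_skip => cases hM with | star _ => exact ⟨k, k, hS, .skip k, hK⟩
  | star_unfold =>
    cases hM with | star hM' =>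
    exact ⟨k, k, hS, .seq hM' (.star hM'), hK⟩
  | sum_l => cases hM with | sum hM₁ _ => exact ⟨k, m, hS, hM₁, hK⟩
  | sum_r => cases hM with | sum _ hM₂ => exact ⟨k, m, hS, hM₂, hK⟩
  | push =>
    obtain rfl := hM.push_inv
    exact ⟨_, _, hS.update_push _ _, .skip _, hK⟩
  | nu =>
    cases hM with | nu x hM' =>
    exact ⟨k, m, hS, hM'.subst _, hK⟩
  | pop_var_same hSa =>
    obtain rfl := hM.pop_inv
    exact ⟨_, _, hS.update_pop hSa, .skip _, hK⟩
  | @pop_app _ a _ v w _ _ hSa =>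
    obtain rfl := hM.pop_inv
    have hS' := hS.update_pop_append hSa (List.ofFn v).reverse
    rw [List.length_reverse, List.length_ofFn] at hS'
    refine ⟨_, _, hS', ?_, hK⟩
    simpa [popSeq] using Ty.popSeqThen a (List.ofFn w) (.skip m)
  | pop_var_subst hSa _ | pop_subst_var hSa _ =>
    obtain rfl := hM.pop_inv
    exact ⟨_, _, (hS.update_pop hSa).subst _, .skip _, hK.subst _⟩

lemma StateTy.reflTransGen {s s' : MState F ar} {n : MTy} (ht : StateTy s n)
    (h : Relation.ReflTransGen Step s s') : StateTy s' n := by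
  induction h with
  | refl => exact ht
  | tail _ hstep ih => exact ih.step hstep

lemma StateTy.not_stuck {s : MState F ar} {n : MTy} (ht : StateTy s n) : ¬ Stuck s := by
  rintro ⟨a, t, hM, hSa⟩
  obtain ⟨k, m, hS, hty, -⟩ := ht
  rw [hM] at hty
  have hlen := hS a
  rw [hSa, hty.pop_inv] at hlen
  simp only [List.length_nil, Finsupp.add_apply, Finsupp.single_eq_same] at hlen
  omega

/-- Machine progress: every state on a run from a typed
machine state makes progress, i.e. no reachable state is a stuck pop on an
empty stack. -/
theorem machine_progress (F : Type) (ar : F → ℕ)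
    (s s' : MState F ar) (n : MTy)
    (hty : StateTy s n) (hrun : Relation.ReflTransGen Step s s') :
    ¬ Stuck s' :=
  (hty.reflTransGen hrun).not_stuck


end RMC
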